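/- Let N be an N-layer (open or closed) Π³-net with N≥3, let m0 be any marking, and let W̄ be the maximal entry of W⁻ and W⁺. Then for every m∈R(m0): m·P_{N−1}^{¬max} ≤ C_{N−2}^{m0}; consequently, if W̄≥1, then m·P_{N−1}^{¬max} ≤ |P|·W̄·‖m0‖. -/

import Mathlib

open Finset

section PetriBasics

variable {P T : Type} [Fintype P] [Fintype T]

/-- Transition `t` is enabled at marking `m`. -/
def Enabled (Wm : P → T → ℕ) (m : P → ℕ) (t : T) : Prop :=
  ∀ p, Wm p t ≤ m p

/-- The marking obtained by firing transition `t` at marking `m`. -/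
def Fire (Wm Wp : P → T → ℕ) (m : P → ℕ) (t : T) : P → ℕ :=
  fun p => m p - Wm p t + Wp p t

/-- One firing step. -/
def Step (Wm Wp : P → T → ℕ) (m m' : P → ℕ) : Prop :=
  ∃ t, Enabled Wm m t ∧ m' = Fire Wm Wp m t

/-- Reachability. -/
def Reach (Wm Wp : P → T → ℕ) : (P → ℕ) → (P → ℕ) → Prop :=
  Relation.ReflTransGen (Step Wm Wp)

/-- One firing step using a transition from the set `S`. -/
def StepIn (Wm Wp : P → T → ℕ) (S : T → Prop) (m m' : P → ℕ) : Prop :=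
  ∃ t, S t ∧ Enabled Wm m t ∧ m' = Fire Wm Wp m t

/-- Reachability using only transitions from the set `S`. -/
def ReachIn (Wm Wp : P → T → ℕ) (S : T → Prop) : (P → ℕ) → (P → ℕ) → Prop :=
  Relation.ReflTransGen (StepIn Wm Wp S)

/-- The marked net `(N, m0)` is live. -/
def LiveMarked (Wm Wp : P → T → ℕ) (m0 : P → ℕ) : Prop :=
  ∀ (t : T) (m : P → ℕ), Reach Wm Wp m0 m →
    ∃ m', Reach Wm Wp m m' ∧ Enabled Wm m' t

/-- `b` is a bag of the net. -/
def IsBag (Wm Wp : P → T → ℕ) (b : P → ℕ) : Prop :=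
  ∃ t, b = (fun p => Wm p t) ∨ b = (fun p => Wp p t)

/-- Edges of the bag graph. -/
def BagEdge (Wm Wp : P → T → ℕ) (b b' : P → ℕ) : Prop :=
  ∃ t, b = (fun p => Wm p t) ∧ b' = (fun p => Wp p t)

/-- Every connected component of the bag graph is strongly connected. -/
def WeaklyReversible (Wm Wp : P → T → ℕ) : Prop :=
  ∀ b b' : P → ℕ,
    Relation.ReflTransGen (fun x y => BagEdge Wm Wp x y ∨ BagEdge Wm Wp y x) b b' →
    Relation.ReflTransGen (BagEdge Wm Wp) b b'

/-- `w · W(t)`, where `W = W⁺ − W⁻` is the incidence matrix. -/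
def IncDot (Wm Wp : P → T → ℕ) (w : P → ℚ) (t : T) : ℚ :=
  ∑ p, w p * ((Wp p t : ℚ) - (Wm p t : ℚ))

/-- `w` is a witness of the bag `b`. -/
def IsWitness (Wm Wp : P → T → ℕ) (b : P → ℕ) (w : P → ℚ) : Prop :=
  ∀ t, (b = (fun p => Wm p t) → IncDot Wm Wp w t = -1) ∧
       (b = (fun p => Wp p t) → IncDot Wm Wp w t = 1) ∧
       (b ≠ (fun p => Wm p t) → b ≠ (fun p => Wp p t) → IncDot Wm Wp w t = 0)

/-- `N` is a Π²-net. -/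
def IsPi2 (Wm Wp : P → T → ℕ) : Prop :=
  WeaklyReversible Wm Wp ∧ ∀ b, IsBag Wm Wp b → ∃ w, IsWitness Wm Wp b w

/-- The potential of a place: `‖b_p‖ − 1`. -/
def potOf (bag : P → P → ℕ) (p : P) : ℕ := (∑ q, bag p q) - 1

/-- Minimum of `f` over `S`, with default value `d` when `S` is empty. -/
def minPotD {α : Type} (S : Finset α) (f : α → ℕ) (d : ℕ) : ℕ :=
  if h : S.Nonempty then S.inf' h f else d

end PetriBasics

/-- An `Nn`-layer closed Π³-net. -/
structure ClosedPi3 (P T : Type) [Fintype P] [Fintype T] (Nn : ℕ) where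
  Wm : P → T → ℕ
  Wp : P → T → ℕ
  no_useless : ∀ t, (fun p => Wm p t) ≠ (fun p => Wp p t)
  no_dup : ∀ t t' : T, (fun p => Wm p t) = (fun p => Wm p t') →
      (fun p => Wp p t) = (fun p => Wp p t') → t = t'
  /-- the bag associated with each place -/
  bag : P → P → ℕ
  /-- the layer of each place -/
  layer : P → ℕ
  bag_isBag : ∀ p, IsBag Wm Wp (bag p)
  bag_surj : ∀ b, IsBag Wm Wp b → ∃ p, bag p = b
  bag_inj : Function.Injective bag
  bag_self : ∀ p, bag p p = 1
  layer_pos : ∀ p, 1 ≤ layer p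
  layer_le : ∀ p, layer p ≤ Nn
  layer_surj : ∀ i, 1 ≤ i → i ≤ Nn → ∃ p, layer p = i
  edge_layer : ∀ p q : P, BagEdge Wm Wp (bag p) (bag q) → layer p = layer q
  layer_conn : ∀ p q : P, layer p = layer q →
      Relation.ReflTransGen (BagEdge Wm Wp) (bag p) (bag q)
  resource : ∀ p q : P, q ≠ p → 0 < bag p q →
      layer q + 1 = layer p ∧ ∀ r, layer r = layer q → potOf bag r ≤ potOf bag q

namespace ClosedPi3

variable {P T : Type} [Fintype P] [Fintype T] {Nn : ℕ} (C : ClosedPi3 P T Nn)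

def pot (p : P) : ℕ := potOf C.bag p

/-- `P_i`: the places of layer `i`. -/
def places (i : ℕ) : Finset P := Finset.univ.filter (fun p => C.layer p = i)

/-- `POT_i`: the maximal potential in layer `i`. -/
def POT (i : ℕ) : ℕ := (C.places i).sup C.pot

/-- `P_i^max`: the places of maximal potential in layer `i`. -/
def placesMax (i : ℕ) : Finset P := (C.places i).filter (fun p => C.pot p = C.POT i)

/-- `cin(p) = POT_i − pot(p)` for `p ∈ P_i`. -/
def cin (p : P) : ℤ := (C.POT (C.layer p) : ℤ) - (C.pot p : ℤ)

/-- The invariant vector `v^(i)` (for `i = Nn` this is `v^(N)`). -/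
def vvec (i : ℕ) : P → ℤ :=
  if i = Nn then (fun p => if C.layer p = Nn then 1 else 0)
  else fun p => (if C.layer p = i then 1 else 0) + (if C.layer p = i + 1 then C.cin p else 0)

/-- `m · v^(i)`. -/
def vdot (i : ℕ) (m : P → ℕ) : ℤ := ∑ p, C.vvec i p * (m p : ℤ)

/-- `m ∈ Inv_i(m0)`. -/
def InvSet (m0 : P → ℕ) (i : ℕ) (m : P → ℕ) : Prop := C.vdot i m = C.vdot i m0

/-- `m ∈ Live_i`. -/
def LiveSet (i : ℕ) (m : P → ℕ) : Prop :=
  if i = Nn then 0 < ∑ p ∈ C.places Nn, m p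
  else minPotD ((C.places (i + 1)).filter (fun p => 0 < m p)) C.pot (C.POT (i + 1))
        ≤ ∑ p ∈ C.places i, m p

/-- `t` belongs to `⋃ {T_i | S i}`: the input bag of `t` lies in a layer satisfying `S`. -/
def transIn (S : ℕ → Prop) (t : T) : Prop :=
  ∃ p, S (C.layer p) ∧ C.bag p = (fun q => C.Wm q t)

/-- The marking `m` is `i`-live. -/
def iLive (i : ℕ) (m : P → ℕ) : Prop :=
  ∀ t, C.transIn (· ≤ i) t →
    ∃ m', ReachIn C.Wm C.Wp (C.transIn (· ≤ i)) m m' ∧ Enabled C.Wm m' t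

end ClosedPi3

/-- An `Nn`-layer open Π³-net over places `P`: it is obtained from an `Nn`-layer
closed Π³-net over `Option P` by deleting the place `none` (a.k.a. `p_ext`),
which lies in layer `Nn`. -/
structure OpenPi3 (P T : Type) [Fintype P] [Fintype T] (Nn : ℕ) where
  closed : ClosedPi3 (Option P) T Nn
  pext_layer : closed.layer none = Nn

namespace OpenPi3

variable {P T : Type} [Fintype P] [Fintype T] {Nn : ℕ} (O : OpenPi3 P T Nn)

/-- Backward incidence matrix of the open net. -/
def Wm : P → T → ℕ := fun p t => O.closed.Wm (some p) t

/-- Forward incidence matrix of the open net. -/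
def Wp : P → T → ℕ := fun p t => O.closed.Wp (some p) t

def layer (p : P) : ℕ := O.closed.layer (some p)

def pot (p : P) : ℕ := O.closed.pot (some p)

/-- `pot(p_ext)`. -/
def potExt : ℕ := O.closed.pot none

/-- `P_i`: the (remaining) places of layer `i`. -/
def places (i : ℕ) : Finset P := Finset.univ.filter (fun p => O.layer p = i)

/-- `POT_i`, with `POT_N = pot(p_ext)` for open nets. -/
def POT (i : ℕ) : ℕ := if i = Nn then O.potExt else (O.places i).sup O.pot

def placesMax (i : ℕ) : Finset P := (O.places i).filter (fun p => O.pot p = O.POT i)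

def cin (p : P) : ℤ := (O.POT (O.layer p) : ℤ) - (O.pot p : ℤ)

/-- The invariant vector `v^(i)` (used for `1 ≤ i ≤ Nn − 1`). -/
def vvec (i : ℕ) : P → ℤ :=
  fun p => (if O.layer p = i then 1 else 0) + (if O.layer p = i + 1 then O.cin p else 0)

def vdot (i : ℕ) (m : P → ℕ) : ℤ := ∑ p, O.vvec i p * (m p : ℤ)

def InvSet (m0 : P → ℕ) (i : ℕ) (m : P → ℕ) : Prop :=
  if i = Nn then True else O.vdot i m = O.vdot i m0

/-- `m ∈ Live_i` for the open net: for `i = N − 1` the virtual place `p_ext`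
always counts as marked. -/
def LiveSet (i : ℕ) (m : P → ℕ) : Prop :=
  if i = Nn then True
  else if i + 1 = Nn then
    min O.potExt
        (minPotD ((O.places Nn).filter (fun p => 0 < m p)) O.pot O.potExt)
      ≤ ∑ p ∈ O.places i, m p
  else
    minPotD ((O.places (i + 1)).filter (fun p => 0 < m p)) O.pot (O.POT (i + 1))
      ≤ ∑ p ∈ O.places i, m p

def transIn (S : ℕ → Prop) (t : T) : Prop := O.closed.transIn S t

def iLive (i : ℕ) (m : P → ℕ) : Prop :=
  ∀ t, O.transIn (· ≤ i) t →
    ∃ m', ReachIn O.Wm O.Wp (O.transIn (· ≤ i)) m m' ∧ Enabled O.Wm m' t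

end OpenPi3

/-! The weight vector `v^(N−2)` is a P-semiflow: its product with a bag depends only on the
bag's layer (it is `1` on layer `N−2`, `POT_{N−1}` on layer `N−1` and `0` elsewhere), because
a bag of layer `j` takes its extra tokens from maximal-potential places of layer `j−1`, where
`cin` vanishes. So `m · v^(N−2) = C_{N−2}^{m0}` along every run. The weights are nonnegative
and at least `1` on `P_{N−1}^{¬max}`, which gives the first bound, and at most
`POT_{N−1} ≤ |P| · W̄`, which gives the second. For an open net, the same weights extended by
`0` at `p_ext` are a semiflow of the underlying closed net, since `p_ext` lies in the last
layer. -/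

section Weights

variable {P : Type} [Fintype P]

lemma sum_le_weighted_sum {S : Finset P} {w : P → ℤ} (h0 : ∀ p, 0 ≤ w p)
    (h1 : ∀ p ∈ S, 1 ≤ w p) (m : P → ℕ) :
    ∑ p ∈ S, (m p : ℤ) ≤ ∑ p, w p * m p :=
  calc ∑ p ∈ S, (m p : ℤ)
      ≤ ∑ p ∈ S, w p * m p :=
        sum_le_sum fun p hp => le_mul_of_one_le_left (Nat.cast_nonneg _) (h1 p hp)
    _ ≤ ∑ p, w p * m p :=
        sum_le_sum_of_subset_of_nonneg (subset_univ S)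
          fun p _ _ => mul_nonneg (h0 p) (Nat.cast_nonneg _)

lemma weighted_sum_le {w : P → ℤ} {c : ℤ} (hc : ∀ p, w p ≤ c) (m : P → ℕ) :
    ∑ p, w p * m p ≤ c * ∑ p, (m p : ℤ) := by
  rw [mul_sum]
  exact sum_le_sum fun p _ => mul_le_mul_of_nonneg_right (hc p) (Nat.cast_nonneg _)

end Weights

section PetriNets

variable {P T : Type} [Fintype P]

def maxWeight [Fintype T] (Wm Wp : P → T → ℕ) : ℕ :=
  univ.sup fun pt : P × T => max (Wm pt.1 pt.2) (Wp pt.1 pt.2)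

lemma IsBag.le_maxWeight [Fintype T] {Wm Wp : P → T → ℕ} {b : P → ℕ} (hb : IsBag Wm Wp b)
    (p : P) : b p ≤ maxWeight Wm Wp := by
  obtain ⟨t, rfl | rfl⟩ := hb
  · exact (le_max_left _ (Wp p t)).trans
      (le_sup (f := fun pt : P × T => max (Wm pt.1 pt.2) (Wp pt.1 pt.2)) (mem_univ (p, t)))
  · exact (le_max_right (Wm p t) _).trans
      (le_sup (f := fun pt : P × T => max (Wm pt.1 pt.2) (Wp pt.1 pt.2)) (mem_univ (p, t)))

lemma Reach.weighted_sum_eq {Wm Wp : P → T → ℕ} {w : P → ℤ}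
    (hflow : ∀ t, ∑ p, w p * Wm p t = ∑ p, w p * Wp p t)
    {m m' : P → ℕ} (h : Reach Wm Wp m m') :
    ∑ p, w p * m' p = ∑ p, w p * m p := by
  induction h with
  | refl => rfl
  | tail _ hstep ih =>
    obtain ⟨t, hen, rfl⟩ := hstep
    rw [← ih]
    simp only [Fire, Nat.cast_add, Nat.cast_sub (hen _), mul_add, mul_sub, sum_add_distrib,
      sum_sub_distrib, hflow t]
    ring

end PetriNets

namespace ClosedPi3

variable {P T : Type} [Fintype P] [Fintype T] {Nn : ℕ} (C : ClosedPi3 P T Nn)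

@[simp]
lemma mem_places {p : P} {j : ℕ} : p ∈ C.places j ↔ C.layer p = j := by
  simp [places]

@[simp]
lemma mem_placesMax {p : P} {j : ℕ} :
    p ∈ C.placesMax j ↔ C.layer p = j ∧ C.pot p = C.POT j := by
  simp [placesMax]

lemma pot_add_one (q : P) : C.pot q + 1 = ∑ r, C.bag q r := by
  have : C.bag q q ≤ ∑ r, C.bag q r := single_le_sum (fun r _ => Nat.zero_le _) (mem_univ q)
  rw [bag_self] at this
  unfold pot potOf
  omega

lemma sum_erase_bag [DecidableEq P] (q : P) :
    ∑ r ∈ univ.erase q, (C.bag q r : ℤ) = C.pot q := by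
  have h := add_sum_erase univ (fun r => (C.bag q r : ℤ)) (mem_univ q)
  have h' : ((C.pot q + 1 : ℕ) : ℤ) = ∑ r, (C.bag q r : ℤ) := by
    rw [pot_add_one]; push_cast; rfl
  rw [bag_self] at h
  push_cast at h h'
  linarith

lemma pot_le_card_mul (q : P) : C.pot q ≤ Fintype.card P * maxWeight C.Wm C.Wp :=
  calc C.pot q ≤ ∑ r, C.bag q r := by rw [← pot_add_one]; omega
    _ ≤ ∑ _r : P, maxWeight C.Wm C.Wp := sum_le_sum fun r _ => (C.bag_isBag q).le_maxWeight r
    _ = Fintype.card P * maxWeight C.Wm C.Wp := by rw [sum_const, smul_eq_mul, card_univ]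

lemma POT_le_card_mul (j : ℕ) : C.POT j ≤ Fintype.card P * maxWeight C.Wm C.Wp :=
  Finset.sup_le fun q _ => C.pot_le_card_mul q

lemma pot_le_POT (p : P) : C.pot p ≤ C.POT (C.layer p) :=
  le_sup ((C.mem_places).2 rfl)

lemma cin_nonneg (p : P) : 0 ≤ C.cin p := by
  have := C.pot_le_POT p
  unfold cin
  omega

lemma pot_eq_POT_of_bag_pos {q r : P} (hrq : r ≠ q) (h : 0 < C.bag q r) :
    C.pot r = C.POT (C.layer r) :=
  (C.pot_le_POT r).antisymm <| Finset.sup_le fun s hs =>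
    (C.resource q r hrq h).2 s ((C.mem_places).1 hs)

lemma cin_eq_zero_of_bag_pos {q r : P} (hrq : r ≠ q) (h : 0 < C.bag q r) : C.cin r = 0 := by
  rw [cin, C.pot_eq_POT_of_bag_pos hrq h, sub_self]

lemma dot_Wm_eq_dot_Wp {w : P → ℤ} (g : ℕ → ℤ)
    (hw : ∀ q, ∑ r, w r * C.bag q r = g (C.layer q)) (t : T) :
    ∑ p, w p * C.Wm p t = ∑ p, w p * C.Wp p t := by
  obtain ⟨q, hq⟩ := C.bag_surj (fun p => C.Wm p t) ⟨t, Or.inl rfl⟩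
  obtain ⟨q', hq'⟩ := C.bag_surj (fun p => C.Wp p t) ⟨t, Or.inr rfl⟩
  have hlayer := C.edge_layer q q' ⟨t, hq, hq'⟩
  have hWm : ∑ p, w p * C.Wm p t = ∑ r, w r * C.bag q r := by rw [hq]
  have hWp : ∑ p, w p * C.Wp p t = ∑ r, w r * C.bag q' r := by rw [hq']
  rw [hWm, hWp, hw, hw, hlayer]

variable {i : ℕ}

lemma vvec_of_ne (hi : i ≠ Nn) (p : P) :
    C.vvec i p =
      (if C.layer p = i then 1 else 0) + (if C.layer p = i + 1 then C.cin p else 0) := by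
  rw [vvec, if_neg hi]

lemma vvec_of_bag_pos (hi : i ≠ Nn) {q r : P} (hrq : r ≠ q) (h : 0 < C.bag q r) :
    C.vvec i r = if C.layer q = i + 1 then 1 else 0 := by
  have hlayer := (C.resource q r hrq h).1
  rw [C.vvec_of_ne hi, C.cin_eq_zero_of_bag_pos hrq h]
  split_ifs <;> omega

lemma vvec_dot_bag (hi : i ≠ Nn) (q : P) :
    ∑ r, C.vvec i r * C.bag q r =
      if C.layer q = i then 1 else if C.layer q = i + 1 then (C.POT (i + 1) : ℤ) else 0 := by
  classical
  have hoff : ∑ r ∈ univ.erase q, C.vvec i r * C.bag q r =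
      if C.layer q = i + 1 then (C.pot q : ℤ) else 0 := by
    calc ∑ r ∈ univ.erase q, C.vvec i r * C.bag q r
        = ∑ r ∈ univ.erase q, (if C.layer q = i + 1 then 1 else 0) * (C.bag q r : ℤ) := by
          refine sum_congr rfl fun r hr => ?_
          rcases (C.bag q r).eq_zero_or_pos with h | h
          · simp [h]
          · rw [C.vvec_of_bag_pos hi (ne_of_mem_erase hr) h]
      _ = if C.layer q = i + 1 then (C.pot q : ℤ) else 0 := by
          split_ifs <;> simp [C.sum_erase_bag]
  rw [← add_sum_erase _ _ (mem_univ q), hoff, bag_self, C.vvec_of_ne hi, cin]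
  split_ifs <;> simp_all

lemma dot_Wm_eq_dot_Wp_vvec (hi : i ≠ Nn) (t : T) :
    ∑ p, C.vvec i p * C.Wm p t = ∑ p, C.vvec i p * C.Wp p t :=
  C.dot_Wm_eq_dot_Wp
    (fun j => if j = i then 1 else if j = i + 1 then (C.POT (i + 1) : ℤ) else 0)
    (C.vvec_dot_bag hi) t

lemma vdot_eq_of_reach (hi : i ≠ Nn) {m0 m : P → ℕ} (h : Reach C.Wm C.Wp m0 m) :
    C.vdot i m = C.vdot i m0 :=
  h.weighted_sum_eq (C.dot_Wm_eq_dot_Wp_vvec hi)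

lemma vvec_nonneg (hi : i ≠ Nn) (p : P) : 0 ≤ C.vvec i p := by
  have := C.cin_nonneg p
  rw [C.vvec_of_ne hi]
  split_ifs <;> omega

lemma one_le_vvec [DecidableEq P] (hi : i ≠ Nn) {p : P}
    (hp : p ∈ C.places (i + 1) \ C.placesMax (i + 1)) : 1 ≤ C.vvec i p := by
  have hlayer : C.layer p = i + 1 := by simp_all
  have hlt : C.pot p < C.POT (i + 1) :=
    (hlayer ▸ C.pot_le_POT p).lt_of_ne fun h => by simp_all
  rw [C.vvec_of_ne hi, cin, if_neg (by omega), if_pos hlayer, hlayer]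
  omega

lemma vvec_le (hi : i ≠ Nn) {c : ℤ} (hc : 1 ≤ c) (hPOT : (C.POT (i + 1) : ℤ) ≤ c)
    (p : P) : C.vvec i p ≤ c := by
  rw [C.vvec_of_ne hi, cin]
  split_ifs <;> simp_all <;> omega

lemma sum_sdiff_placesMax_le_vdot [DecidableEq P] (hi : i ≠ Nn) {m0 m : P → ℕ}
    (h : Reach C.Wm C.Wp m0 m) :
    ∑ p ∈ C.places (i + 1) \ C.placesMax (i + 1), (m p : ℤ) ≤ C.vdot i m0 :=
  (sum_le_weighted_sum (C.vvec_nonneg hi) (fun _ hp => C.one_le_vvec hi hp) m).trans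
    (C.vdot_eq_of_reach hi h).le

lemma vdot_le_card_mul (hi : i ≠ Nn) (hW : 1 ≤ maxWeight C.Wm C.Wp) (m0 : P → ℕ) :
    C.vdot i m0 ≤ ((Fintype.card P * maxWeight C.Wm C.Wp : ℕ) : ℤ) * ∑ p, (m0 p : ℤ) := by
  refine weighted_sum_le (fun p => C.vvec_le hi ?_ ?_ p) m0
  · have : 0 < Fintype.card P := Fintype.card_pos_iff.mpr ⟨p⟩
    exact_mod_cast Nat.mul_pos this hW
  · exact_mod_cast C.POT_le_card_mul (i + 1)

end ClosedPi3

namespace OpenPi3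

variable {P T : Type} [Fintype P] [Fintype T] {Nn : ℕ} (O : OpenPi3 P T Nn)

@[simp]
lemma mem_places {p : P} {j : ℕ} : p ∈ O.places j ↔ O.layer p = j := by
  simp [places]

@[simp]
lemma mem_placesMax {p : P} {j : ℕ} :
    p ∈ O.placesMax j ↔ O.layer p = j ∧ O.pot p = O.POT j := by
  simp [placesMax]

lemma closed_places_of_ne {j : ℕ} (hj : j ≠ Nn) :
    O.closed.places j = (O.places j).map Function.Embedding.some := by
  ext o
  cases o with
  | none => simp [O.pext_layer, Ne.symm hj]
  | some p => simp [layer]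

lemma closed_POT_of_ne {j : ℕ} (hj : j ≠ Nn) : O.closed.POT j = O.POT j := by
  rw [ClosedPi3.POT, O.closed_places_of_ne hj, sup_map, POT, if_neg hj]
  rfl

lemma vvec_eq_closed {i : ℕ} (hi : i + 1 < Nn) (p : P) :
    O.vvec i p = O.closed.vvec i (some p) := by
  have hlayer : O.closed.layer (some p) = O.layer p := rfl
  rw [vvec, ClosedPi3.vvec_of_ne _ (by omega), hlayer]
  by_cases hp : O.layer p = i + 1
  · simp only [cin, ClosedPi3.cin, hlayer, hp,
      O.closed_POT_of_ne (show i + 1 ≠ Nn by omega)]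
    rfl
  · rw [if_neg hp, if_neg hp]

lemma closed_vvec_none {i : ℕ} (hi : i + 1 < Nn) : O.closed.vvec i none = 0 := by
  rw [ClosedPi3.vvec_of_ne _ (by omega), O.pext_layer]
  simp only [if_neg (show Nn ≠ i by omega), if_neg (show Nn ≠ i + 1 by omega), add_zero]

lemma closed_bag_some_none (q : P) : O.closed.bag (some q) none = 0 := by
  by_contra h
  have := (O.closed.resource (some q) none (by simp) (Nat.pos_of_ne_zero h)).1
  have := O.closed.layer_le (some q)
  rw [O.pext_layer] at *
  omega

lemma pot_le_card_mul (q : P) : O.pot q ≤ Fintype.card P * maxWeight O.Wm O.Wp :=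
  calc O.pot q ≤ ∑ r, O.closed.bag (some q) r := by
        rw [pot, ← ClosedPi3.pot_add_one]; omega
    _ = ∑ r : P, O.closed.bag (some q) (some r) := by
        rw [Fintype.sum_option, O.closed_bag_some_none, zero_add]
    _ ≤ ∑ _r : P, maxWeight O.Wm O.Wp := sum_le_sum fun r _ => by
        obtain ⟨t, ht | ht⟩ := O.closed.bag_isBag (some q)
        · rw [ht]; exact IsBag.le_maxWeight (b := fun p => O.Wm p t) ⟨t, Or.inl rfl⟩ r
        · rw [ht]; exact IsBag.le_maxWeight (b := fun p => O.Wp p t) ⟨t, Or.inr rfl⟩ r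
    _ = Fintype.card P * maxWeight O.Wm O.Wp := by rw [sum_const, smul_eq_mul, card_univ]

variable {i : ℕ}

lemma vdot_eq_of_reach (hi : i + 1 < Nn) {m0 m : P → ℕ} (h : Reach O.Wm O.Wp m0 m) :
    O.vdot i m = O.vdot i m0 := by
  refine h.weighted_sum_eq fun t => ?_
  have hflow := O.closed.dot_Wm_eq_dot_Wp_vvec (i := i) (by omega) t
  simp only [Fintype.sum_option, O.closed_vvec_none hi, zero_mul, zero_add] at hflow
  simp only [O.vvec_eq_closed hi]
  exact hflow

lemma sum_sdiff_placesMax_le_vdot [DecidableEq P] (hi : i + 1 < Nn) {m0 m : P → ℕ}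
    (h : Reach O.Wm O.Wp m0 m) :
    ∑ p ∈ O.places (i + 1) \ O.placesMax (i + 1), (m p : ℤ) ≤ O.vdot i m0 := by
  refine (sum_le_weighted_sum (fun p => ?_) (fun p hp => ?_) m).trans
    (O.vdot_eq_of_reach hi h).le
  · exact O.vvec_eq_closed hi p ▸ O.closed.vvec_nonneg (by omega) (some p)
  · rw [O.vvec_eq_closed hi]
    refine O.closed.one_le_vvec (by omega) ?_
    have := O.closed_POT_of_ne (show i + 1 ≠ Nn by omega)
    simp_all [layer, pot]

lemma vdot_le_card_mul (hi : i + 1 < Nn) (hW : 1 ≤ maxWeight O.Wm O.Wp) (m0 : P → ℕ) :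
    O.vdot i m0 ≤ ((Fintype.card P * maxWeight O.Wm O.Wp : ℕ) : ℤ) * ∑ p, (m0 p : ℤ) := by
  refine weighted_sum_le
    (fun p => O.vvec_eq_closed hi p ▸ O.closed.vvec_le (by omega) ?_ ?_ _) m0
  · have : 0 < Fintype.card P := Fintype.card_pos_iff.mpr ⟨p⟩
    exact_mod_cast Nat.mul_pos this hW
  · rw [O.closed_POT_of_ne (by omega), POT, if_neg (by omega)]
    exact_mod_cast Finset.sup_le fun q _ => O.pot_le_card_mul q

end OpenPi3

/-- for every reachable marking `m` of an N-layer (open or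
closed) Π³-net with `N ≥ 3`, `m · P_{N−1}^{¬max} ≤ C_{N−2}^{m0}`, and if the
maximal edge weight `W̄ ≥ 1` then `m · P_{N−1}^{¬max} ≤ |P| · W̄ · ‖m0‖`. -/
theorem stmt_16 :
    (∀ (P T : Type) [Fintype P] [Fintype T] [DecidableEq P] (Nn : ℕ),
      3 ≤ Nn → ∀ (C : ClosedPi3 P T Nn) (m0 m : P → ℕ),
        Reach C.Wm C.Wp m0 m →
          (∑ p ∈ C.places (Nn - 1) \ C.placesMax (Nn - 1), (m p : ℤ))
              ≤ C.vdot (Nn - 2) m0 ∧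
          (1 ≤ (Finset.univ.sup fun pt : P × T =>
                  max (C.Wm pt.1 pt.2) (C.Wp pt.1 pt.2)) →
            (∑ p ∈ C.places (Nn - 1) \ C.placesMax (Nn - 1), m p) ≤
              Fintype.card P *
                (Finset.univ.sup fun pt : P × T =>
                  max (C.Wm pt.1 pt.2) (C.Wp pt.1 pt.2)) * (∑ p, m0 p))) ∧
    (∀ (P T : Type) [Fintype P] [Fintype T] [DecidableEq P] (Nn : ℕ),
      3 ≤ Nn → ∀ (O : OpenPi3 P T Nn) (m0 m : P → ℕ),
        Reach O.Wm O.Wp m0 m →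
          (∑ p ∈ O.places (Nn - 1) \ O.placesMax (Nn - 1), (m p : ℤ))
              ≤ O.vdot (Nn - 2) m0 ∧
          (1 ≤ (Finset.univ.sup fun pt : P × T =>
                  max (O.Wm pt.1 pt.2) (O.Wp pt.1 pt.2)) →
            (∑ p ∈ O.places (Nn - 1) \ O.placesMax (Nn - 1), m p) ≤
              Fintype.card P *
                (Finset.univ.sup fun pt : P × T =>
                  max (O.Wm pt.1 pt.2) (O.Wp pt.1 pt.2)) * (∑ p, m0 p))) := by
  refine ⟨fun P T _ _ _ Nn hN C m0 m hreach => ?_, fun P T _ _ _ Nn hN O m0 m hreach => ?_⟩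
  · have hi : Nn - 2 ≠ Nn := by omega
    have hbound := C.sum_sdiff_placesMax_le_vdot hi hreach
    rw [show Nn - 2 + 1 = Nn - 1 by omega] at hbound
    exact ⟨hbound, fun hW => by exact_mod_cast hbound.trans (C.vdot_le_card_mul hi hW m0)⟩
  · have hi : Nn - 2 + 1 < Nn := by omega
    have hbound := O.sum_sdiff_placesMax_le_vdot hi hreach
    rw [show Nn - 2 + 1 = Nn - 1 by omega] at hbound
    exact ⟨hbound, fun hW => by exact_mod_cast hbound.trans (O.vdot_le_card_mul hi hW m0)⟩
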